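/- Let U be a unitary matrix as in the block setup above and Ξ(z) = U₁₁ + z U₁₂ (I − z U₂₂)⁻¹ U₂₁. Then ‖Ξ(z)‖ ≤ 1 (operator norm) for every z in the open unit disk where Ξ is defined. -/

import Mathlib

/-!
Put `y = (1 - z D)⁻¹ C x`. Then the unitary `[[A, B], [C, D]]` maps `(x, z y)` to `(Ξ(z) x, y)`,
so preservation of norms gives `‖Ξ(z) x‖² + ‖y‖² = ‖x‖² + |z|² ‖y‖² ≤ ‖x‖² + ‖y‖²`.
-/

open Matrix WithLp

variable {𝕜 m p : Type*} [RCLike 𝕜] [Fintype m] [Fintype p]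

theorem Matrix.norm_toLp_mulVec_of_mem_unitaryGroup [DecidableEq m] {U : Matrix m m 𝕜}
    (hU : U ∈ unitaryGroup m 𝕜) (v : m → 𝕜) : ‖toLp 2 (U *ᵥ v)‖ = ‖toLp 2 v‖ :=
  (toEuclideanCLM (n := m) (𝕜 := 𝕜) U).norm_map_of_mem_unitary
    (Unitary.map_mem toEuclideanCLM hU) (toLp 2 v)

theorem EuclideanSpace.norm_toLp_sumElim_sq (a : m → 𝕜) (b : p → 𝕜) :
    ‖toLp 2 (Sum.elim a b)‖ ^ 2 = ‖toLp 2 a‖ ^ 2 + ‖toLp 2 b‖ ^ 2 := by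
  simp only [EuclideanSpace.norm_sq_eq, Fintype.sum_sum_type, Sum.elim_inl, Sum.elim_inr]

variable [DecidableEq p]

noncomputable def Matrix.transferFunction (A : Matrix m m 𝕜) (B : Matrix m p 𝕜)
    (C : Matrix p m 𝕜) (D : Matrix p p 𝕜) (z : 𝕜) : Matrix m m 𝕜 :=
  A + z • (B * (1 - z • D)⁻¹ * C)

theorem Matrix.fromBlocks_mulVec_sumElim_transferFunction {A : Matrix m m 𝕜} {B : Matrix m p 𝕜}
    {C : Matrix p m 𝕜} {D : Matrix p p 𝕜} {z : 𝕜} (hz : IsUnit (1 - z • D)) (x : m → 𝕜) :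
    fromBlocks A B C D *ᵥ Sum.elim x (z • ((1 - z • D)⁻¹ *ᵥ C *ᵥ x)) =
      Sum.elim (transferFunction A B C D z *ᵥ x) ((1 - z • D)⁻¹ *ᵥ C *ᵥ x) := by
  set y := (1 - z • D)⁻¹ *ᵥ C *ᵥ x
  have hy : C *ᵥ x + z • D *ᵥ y = y := by
    have : (1 - z • D) *ᵥ y = C *ᵥ x := by
      rw [mulVec_mulVec, mul_nonsing_inv _ ((isUnit_iff_isUnit_det _).mp hz), one_mulVec]
    rw [sub_mulVec, one_mulVec, smul_mulVec] at this
    rw [← this, sub_add_cancel]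
  rw [fromBlocks_mulVec, Sum.elim_comp_inl, Sum.elim_comp_inr, mulVec_smul, mulVec_smul, hy,
    transferFunction, add_mulVec, smul_mulVec, Matrix.mul_assoc, ← mulVec_mulVec,
    ← mulVec_mulVec]

theorem Matrix.norm_toLp_transferFunction_mulVec_le [DecidableEq m] {A : Matrix m m 𝕜}
    {B : Matrix m p 𝕜} {C : Matrix p m 𝕜} {D : Matrix p p 𝕜}
    (hU : fromBlocks A B C D ∈ unitaryGroup (m ⊕ p) 𝕜) {z : 𝕜} (hz : ‖z‖ ≤ 1)
    (hD : IsUnit (1 - z • D)) (x : m → 𝕜) :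
    ‖toLp 2 (transferFunction A B C D z *ᵥ x)‖ ≤ ‖toLp 2 x‖ := by
  have hnorm := congrArg (· ^ 2) <|
    norm_toLp_mulVec_of_mem_unitaryGroup hU (Sum.elim x (z • ((1 - z • D)⁻¹ *ᵥ C *ᵥ x)))
  rw [fromBlocks_mulVec_sumElim_transferFunction hD] at hnorm
  set y := (1 - z • D)⁻¹ *ᵥ C *ᵥ x
  simp only [EuclideanSpace.norm_toLp_sumElim_sq, toLp_smul, norm_smul] at hnorm
  have hz2 : ‖z‖ ^ 2 ≤ 1 := pow_le_one₀ (norm_nonneg z) hz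
  refine le_of_sq_le_sq ?_ (norm_nonneg _)
  nlinarith [sq_nonneg ‖toLp 2 y‖]

theorem Matrix.norm_toEuclideanCLM_transferFunction_le [DecidableEq m] {A : Matrix m m 𝕜}
    {B : Matrix m p 𝕜} {C : Matrix p m 𝕜} {D : Matrix p p 𝕜}
    (hU : fromBlocks A B C D ∈ unitaryGroup (m ⊕ p) 𝕜) {z : 𝕜} (hz : ‖z‖ ≤ 1)
    (hD : IsUnit (1 - z • D)) :
    ‖toEuclideanCLM (n := m) (𝕜 := 𝕜) (transferFunction A B C D z)‖ ≤ 1 :=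
  ContinuousLinearMap.opNorm_le_bound _ zero_le_one fun x => by
    rw [one_mul]
    exact norm_toLp_transferFunction_mulVec_le hU hz hD (ofLp x)

theorem stmt2 (n k : ℕ)
    (U11 : Matrix (Fin n) (Fin n) ℂ) (U12 : Matrix (Fin n) (Fin k) ℂ)
    (U21 : Matrix (Fin k) (Fin n) ℂ) (U22 : Matrix (Fin k) (Fin k) ℂ)
    (hU : Matrix.fromBlocks U11 U12 U21 U22 ∈ Matrix.unitaryGroup (Fin n ⊕ Fin k) ℂ) :
    ∀ z : ℂ, ‖z‖ < 1 → IsUnit (1 - z • U22) →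
      ‖Matrix.toEuclideanCLM (𝕜 := ℂ) (U11 + z • (U12 * (1 - z • U22)⁻¹ * U21))‖ ≤ 1 :=
  fun _ hz hD => norm_toEuclideanCLM_transferFunction_le hU hz.le hD
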